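/- arXiv:1709.03038 — 7 statements merged into one kernel-verified Lean document; each statement's English description precedes it below -/
import Mathlib

section
/- Let n ≥ 1 and suppose multiplication by n! is injective in the commutative group S. If A : Gⁿ → S is a symmetric n-additive function (G a commutative monoid) whose diagonalization A*(x) = A(x,…,x) vanishes identically, then A is identically zero. -/
/-!
Expanding `A (∑ i ∈ T, y i, …, ∑ i ∈ T, y i)` by multilinearity and summing over `T ⊆ {1, …, n}`
with sign `(-1) ^ (n - #T)`, inclusion–exclusion cancels every term `A (y ∘ r)` with `r` not
surjective, leaving `∑ σ, A (y ∘ σ) = n! • A y` by symmetry. The left side vanishes since `A`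
vanishes on the diagonal, and `n!` can be cancelled. Additivity in each variable is exactly
`ℕ`-multilinearity, so Mathlib's expansion of multilinear maps applies.
-/

open Finset Function

theorem Finset.sum_superset_neg_one_pow_card_compl {α : Type*} [Fintype α] [DecidableEq α]
    (s : Finset α) : ∑ t with s ⊆ t, (-1 : ℤ) ^ #tᶜ = if s = univ then 1 else 0 := by
  have hcompl : ∑ t with s ⊆ t, (-1 : ℤ) ^ #tᶜ = ∑ u ∈ sᶜ.powerset, (-1 : ℤ) ^ #u :=
    sum_nbij' compl compl (by simp) (by simp [subset_compl_comm]) (by simp) (by simp) (by simp)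
  rw [hcompl, sum_powerset_neg_one_pow_card]
  simp only [compl_eq_empty_iff]

theorem Finset.sum_filter_surjective_eq_sum_perm {ι M : Type*} [Fintype ι] [DecidableEq ι]
    [AddCommMonoid M] (g : (ι → ι) → M) :
    ∑ r with Surjective r, g r = ∑ σ : Equiv.Perm ι, g σ := by
  refine (sum_bij (fun (σ : Equiv.Perm ι) _ => (σ : ι → ι))
    (fun σ _ => by simp [σ.surjective]) (fun _ _ _ _ h => Equiv.coe_fn_injective h)
    (fun r hr => ?_) (fun _ _ => rfl)).symm
  simp only [mem_filter, mem_univ, true_and] at hr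
  exact ⟨Equiv.ofBijective r (Finite.surjective_iff_bijective.mp hr), mem_univ _, rfl⟩

namespace MultilinearMap

variable {R ι M N : Type*} [Semiring R] [Fintype ι] [DecidableEq ι]
  [AddCommMonoid M] [Module R M] [AddCommGroup N] [Module R N]

theorem alternating_sum_map_const_eq_sum_perm (f : MultilinearMap R (fun _ : ι => M) N)
    (y : ι → M) :
    ∑ t : Finset ι, (-1 : ℤ) ^ #tᶜ • f (fun _ => ∑ i ∈ t, y i) =
      ∑ σ : Equiv.Perm ι, f (y ∘ σ) := by
  have hcoeff (r : ι → ι) :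
      ∑ t with univ.image r ⊆ t, (-1 : ℤ) ^ #tᶜ = if Surjective r then 1 else 0 := by
    rw [sum_superset_neg_one_pow_card_compl]
    congr 1
    simp [eq_univ_iff_forall, Surjective]
  calc ∑ t : Finset ι, (-1 : ℤ) ^ #tᶜ • f (fun _ => ∑ i ∈ t, y i)
      = ∑ t : Finset ι, ∑ r : ι → ι,
          if univ.image r ⊆ t then (-1 : ℤ) ^ #tᶜ • f (y ∘ r) else 0 := by
        refine sum_congr rfl fun t _ => ?_
        rw [map_sum_finset, smul_sum, ← sum_filter]
        congr 1
        ext r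
        simp [image_subset_iff]
    _ = ∑ r : ι → ι, (∑ t with univ.image r ⊆ t, (-1 : ℤ) ^ #tᶜ) • f (y ∘ r) := by
        rw [sum_comm]
        simp only [sum_smul, sum_filter, ite_smul, zero_smul]
    _ = ∑ r with Surjective r, f (y ∘ r) := by simp [hcoeff, sum_filter]
    _ = ∑ σ : Equiv.Perm ι, f (y ∘ σ) := sum_filter_surjective_eq_sum_perm _

theorem factorial_smul_eq_zero_of_map_const_eq_zero (f : MultilinearMap R (fun _ : ι => M) N)
    (hsym : ∀ (x : ι → M) (σ : Equiv.Perm ι), f (x ∘ σ) = f x)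
    (hconst : ∀ x : M, f (fun _ => x) = 0)
    (y : ι → M) : (Fintype.card ι).factorial • f y = 0 := by
  have hpolar := f.alternating_sum_map_const_eq_sum_perm y
  simp only [hconst, smul_zero, sum_const_zero, hsym] at hpolar
  rw [sum_const, card_univ, Fintype.card_perm] at hpolar
  exact hpolar.symm

end MultilinearMap

theorem map_update_nsmul_of_map_update_add {ι N : Type*} {M : ι → Type*} [DecidableEq ι]
    [∀ i, AddCommMonoid (M i)] [AddCancelCommMonoid N] (f : (∀ i, M i) → N)
    (hf : ∀ (x : ∀ i, M i) (i : ι) (a b : M i),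
      f (update x i (a + b)) = f (update x i a) + f (update x i b))
    (x : ∀ i, M i) (i : ι) (c : ℕ) (a : M i) :
    f (update x i (c • a)) = c • f (update x i a) := by
  induction c with
  | zero =>
    have h := hf x i 0 0
    rw [add_zero, left_eq_add] at h
    simpa using h
  | succ k ih => rw [succ_nsmul, hf, ih, succ_nsmul]

def MultilinearMap.ofMapUpdateAdd {ι N : Type*} {M : ι → Type*} [DecidableEq ι]
    [∀ i, AddCommMonoid (M i)] [AddCancelCommMonoid N] (f : (∀ i, M i) → N)
    (hf : ∀ (x : ∀ i, M i) (i : ι) (a b : M i),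
      f (update x i (a + b)) = f (update x i a) + f (update x i b)) :
    MultilinearMap ℕ M N where
  toFun := f
  map_update_add' x i a b := by convert hf x i a b
  map_update_smul' x i c a := map_update_nsmul_of_map_update_add f (by convert hf) x i c a

theorem stmt_10_general {G S : Type*} [AddCommMonoid G] [AddCommGroup S] (n : ℕ)
    (hinj : Function.Injective (fun s : S => n.factorial • s))
    (A : (Fin n → G) → S)
    (hadd : ∀ (x : Fin n → G) (i : Fin n) (a b : G),
      A (Function.update x i (a + b)) = A (Function.update x i a) + A (Function.update x i b))
    (hsym : ∀ (x : Fin n → G) (σ : Equiv.Perm (Fin n)), A (x ∘ σ) = A x)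
    (hdiag : ∀ x : G, A (fun _ => x) = 0) :
    ∀ y : Fin n → G, A y = 0 := by
  intro y
  have h := (MultilinearMap.ofMapUpdateAdd A hadd).factorial_smul_eq_zero_of_map_const_eq_zero
    hsym hdiag y
  rw [Fintype.card_fin] at h
  exact hinj (h.trans (smul_zero _).symm)

theorem stmt_10 {G S : Type*} [AddCommMonoid G] [AddCommGroup S] (n : ℕ) (hn : 1 ≤ n)
    (hinj : Function.Injective (fun s : S => n.factorial • s))
    (A : (Fin n → G) → S)
    (hadd : ∀ (x : Fin n → G) (i : Fin n) (a b : G),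
      A (Function.update x i (a + b)) = A (Function.update x i a) + A (Function.update x i b))
    (hsym : ∀ (x : Fin n → G) (σ : Equiv.Perm (Fin n)), A (x ∘ σ) = A x)
    (hdiag : ∀ x : G, A (fun _ => x) = 0) :
    ∀ y : Fin n → G, A y = 0 :=
  stmt_10_general n hinj A hadd hsym hdiag
end

section
/- Let R be a commutative ℚ-algebra with unit (i.e. a linear commutative unitary ring), n ≥ 1, and let A : R → R be additive. Then A ∈ Dₙ(R) if and only if the univariate identity Σ_{i=0}^{n} (−1)^i C(n+1, i) x^i A(x^{n+1−i}) = 0 holds for all x ∈ R. -/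
/-!
Let `B_x f y = f (x y) - x f y - f x y` (that is, `leibnizDefect x f y`). The operators `B_x`
commute and `B_z f x = B_x f z`, so `B_x^n (B_z f) x = B_x^(n+1) f z`; by induction,
`f ∈ Dₙ(R)` iff `B_x^n f x = 0` for all `x`, and this diagonal value is the alternating binomial
sum of the statement. The induction step is a polarization: for additive `f`,
`B_(x+tz)^n f (x + t z)` is a polynomial in `t ∈ ℕ` whose linear coefficient is
`(n + 1) B_x^n f z`, and over a ℚ-algebra a polynomial vanishing at every natural number is zero.
-/

/-- `IsDerOrd R n f` : `f` is a derivation of order `n` in the sense of Reich: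
`D₀(R) = {0}`, and `f ∈ Dₙ(R)` iff `f` is additive and
`B(x,y) = f(xy) − x·f(y) − f(x)·y` is a derivation of order `n−1` in each variable. -/
def IsDerOrd (R : Type*) [CommRing R] : ℕ → (R → R) → Prop
  | 0, f => f = 0
  | n + 1, f => (∀ x y : R, f (x + y) = f x + f y) ∧
      (∀ y : R, IsDerOrd R n (fun x => f (x * y) - x * f y - f x * y)) ∧
      (∀ x : R, IsDerOrd R n (fun y => f (x * y) - x * f y - f x * y))

open Finset Polynomial

theorem Polynomial.eq_zero_of_forall_eval_natCast_eq_zero {R : Type*} [CommRing R]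
    [IsAddTorsionFree R] {P : R[X]} (h : ∀ n : ℕ, P.eval (n : R) = 0) : P = 0 := by
  -- the `natDegree`-th forward difference of `P` is `natDegree! • leadingCoeff`, and it is a
  -- combination of values of `P` at natural numbers
  have hdiff := congrFun P.fwdDiff_iter_degree_eq_factorial 0
  simp only [fwdDiff_iter_eq_sum_shift, zero_add, nsmul_one, h, smul_zero, sum_const_zero,
    Pi.smul_apply, Pi.natCast_apply, smul_eq_mul, ← nsmul_eq_mul'] at hdiff
  rw [eq_comm, nsmul_eq_zero_iff, leadingCoeff_eq_zero] at hdiff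
  exact hdiff.resolve_right (Nat.factorial_ne_zero _)

section LeibnizDefect

variable {R : Type*} [CommRing R]

def leibnizDefect (x : R) : Module.End R (R → R) where
  toFun f y := f (x * y) - x * f y - f x * y
  map_add' f g := by ext y; simp only [Pi.add_apply]; ring
  map_smul' c f := by ext y; simp only [Pi.smul_apply, smul_eq_mul, RingHom.id_apply]; ring

@[simp]
lemma leibnizDefect_apply (x : R) (f : R → R) (y : R) :
    leibnizDefect x f y = f (x * y) - x * f y - f x * y := rfl

lemma leibnizDefect_apply_comm (x z : R) (f : R → R) :
    leibnizDefect z f x = leibnizDefect x f z := by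
  simp only [leibnizDefect_apply, mul_comm z x]; ring

lemma commute_leibnizDefect (x z : R) : Commute (leibnizDefect x) (leibnizDefect z) := by
  refine LinearMap.ext fun f => funext fun y => ?_
  simp only [Module.End.mul_apply, leibnizDefect_apply]
  ring_nf

lemma leibnizDefect_pow_apply_swap (x z : R) (f : R → R) (m : ℕ) :
    (leibnizDefect x ^ m) (leibnizDefect z f) x = (leibnizDefect x ^ (m + 1)) f z := by
  calc (leibnizDefect x ^ m) (leibnizDefect z f) x
      = leibnizDefect z ((leibnizDefect x ^ m) f) x := by
        rw [← Module.End.mul_apply, ← ((commute_leibnizDefect z x).pow_right m).eq]; rfl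
    _ = (leibnizDefect x ^ (m + 1)) f z := by rw [leibnizDefect_apply_comm, pow_succ']; rfl

lemma isDerOrd_succ_iff (n : ℕ) (f : R → R) :
    IsDerOrd R (n + 1) f ↔
      (∀ x y, f (x + y) = f x + f y) ∧ ∀ x, IsDerOrd R n (leibnizDefect x f) := by
  have hswap : ∀ y, (fun x => f (x * y) - x * f y - f x * y) = leibnizDefect y f :=
    fun y => funext fun x => by rw [leibnizDefect_apply, mul_comm x y]; ring
  rw [IsDerOrd, and_congr_right_iff]
  intro _
  simp only [hswap]
  exact and_self_iff

theorem sum_alternating_choose_leibnizDefect (f : R → R) (x : R) (n : ℕ) :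
    ∑ i ∈ range (n + 1), (-1 : R) ^ i * ((n + 1).choose i : R) * x ^ i *
        leibnizDefect x f (x ^ (n + 1 - i)) =
      ∑ i ∈ range (n + 2),
        (-1 : R) ^ i * ((n + 2).choose i : R) * x ^ i * f (x ^ (n + 2 - i)) := by
  simp only [leibnizDefect_apply]
  set g : ℕ → ℕ → R := fun i j => (-1 : R) ^ i * x ^ i * f (x ^ j) with hg
  have halt : ∑ i ∈ range (n + 1), (-1 : R) ^ i * ((n + 1).choose i : R) = -(-1) ^ (n + 1) := by
    have h := congrArg (Int.cast : ℤ → R)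
      (Int.alternating_sum_range_choose_of_ne n.succ_ne_zero)
    push_cast at h
    rw [sum_range_succ, Nat.choose_self, Nat.cast_one, mul_one] at h
    exact eq_neg_of_add_eq_zero_left h
  -- Pascal's rule; the `f x * x ^ (n + 1 - i)` terms on the left add up to the missing term
  -- `(-1) ^ (n + 1) * x ^ (n + 1) * f x` of the right side
  have pascal := sum_choose_succ_mul g (n + 1)
  rw [sum_range_succ (fun i => ((n + 1 + 1).choose i : R) * g i (n + 1 + 1 - i)) (n + 2),
    sum_range_succ (fun i => ((n + 1).choose i : R) * g i (n + 1 + 1 - i)) (n + 1),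
    sum_range_succ (fun i => ((n + 1).choose i : R) * g (i + 1) (n + 1 - i)) (n + 1)] at pascal
  have hterm : ∀ i ∈ range (n + 1),
      (-1 : R) ^ i * ((n + 1).choose i : R) * x ^ i *
        (f (x * x ^ (n + 1 - i)) - x * f (x ^ (n + 1 - i)) - f x * x ^ (n + 1 - i)) =
      ((n + 1).choose i : R) * g i (n + 1 + 1 - i) + ((n + 1).choose i : R) * g (i + 1) (n + 1 - i)
        - f x * x ^ (n + 1) * ((-1 : R) ^ i * ((n + 1).choose i : R)) := by
    intro i hi
    obtain ⟨k, rfl⟩ := Nat.exists_eq_add_of_le (Nat.lt_succ_iff.mp (mem_range.mp hi))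
    simp only [hg, show i + k + 1 - i = k + 1 by omega, show i + k + 1 + 1 - i = k + 2 by omega,
      ← pow_succ']
    ring
  have hterm' : ∀ i ∈ range (n + 2),
      (-1 : R) ^ i * ((n + 2).choose i : R) * x ^ i * f (x ^ (n + 2 - i)) =
        ((n + 1 + 1).choose i : R) * g i (n + 1 + 1 - i) := fun i _ => by simp only [hg]; ring
  rw [sum_congr rfl hterm, sum_congr rfl hterm', sum_sub_distrib, sum_add_distrib, ← mul_sum,
    halt]
  simp only [hg, Nat.choose_self, Nat.cast_one, one_mul, Nat.sub_self, pow_zero,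
    Nat.add_sub_cancel_left, pow_one] at pascal ⊢
  linear_combination -pascal

theorem leibnizDefect_pow_apply_self (f : R → R) (n : ℕ) (x : R) :
    (leibnizDefect x ^ n) f x =
      ∑ i ∈ range (n + 1),
        (-1 : R) ^ i * ((n + 1).choose i : R) * x ^ i * f (x ^ (n + 1 - i)) := by
  induction n generalizing f with
  | zero => simp
  | succ n ih => rw [pow_succ, Module.End.mul_apply, ih, sum_alternating_choose_leibnizDefect]

variable {f : R → R} (hf : ∀ x y, f (x + y) = f x + f y)
include hf

lemma map_natCast_mul_of_map_add (t : ℕ) (y : R) : f (t * y) = t * f y := by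
  have := map_nsmul (AddMonoidHom.mk' f hf) t y
  simpa only [nsmul_eq_mul, AddMonoidHom.mk'_apply] using this

lemma leibnizDefect_map_add (x y w : R) :
    leibnizDefect x f (y + w) = leibnizDefect x f y + leibnizDefect x f w := by
  simp only [leibnizDefect_apply, mul_add, hf]; ring

lemma leibnizDefect_add_natCast_mul (x z : R) (t : ℕ) :
    leibnizDefect (x + t * z) f = leibnizDefect x f + (t : R) • leibnizDefect z f := by
  ext y
  simp only [leibnizDefect_apply, Pi.add_apply, Pi.smul_apply, smul_eq_mul, add_mul, hf,
    mul_assoc, map_natCast_mul_of_map_add hf]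
  ring

theorem exists_polynomial_leibnizDefect_pow_apply_self (m : ℕ) (x z : R) :
    ∃ p : R[X], p.coeff 0 = (leibnizDefect x ^ m) f x ∧
      p.coeff 1 = (m + 1) * (leibnizDefect x ^ m) f z ∧
      ∀ t : ℕ, (leibnizDefect (x + t * z) ^ m) f (x + t * z) = p.eval (t : R) := by
  induction m generalizing f with
  | zero =>
    refine ⟨C (f x) + C (f z) * X, by simp, by simp, fun t => ?_⟩
    rw [pow_zero, Module.End.one_apply, hf, map_natCast_mul_of_map_add hf]
    simp only [eval_add, eval_C, eval_mul, eval_X]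
    ring
  | succ m ih =>
    obtain ⟨p, hp0, hp1, hp⟩ := ih (leibnizDefect_map_add hf x)
    obtain ⟨q, hq0, -, hq⟩ := ih (leibnizDefect_map_add hf z)
    -- `B_(x+tz) = B_x + t B_z`, and by symmetry the constant term of `q` is `B_x^(m+1) f z`
    refine ⟨p + X * q, ?_, ?_, fun t => ?_⟩
    · simp [hp0, pow_succ]
    · simp only [coeff_add, coeff_X_mul, hp1, hq0, leibnizDefect_pow_apply_swap, pow_succ,
        Module.End.mul_apply]
      push_cast
      ring
    · rw [pow_succ, Module.End.mul_apply, leibnizDefect_add_natCast_mul hf, map_add, map_smul,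
        Pi.add_apply, Pi.smul_apply, hp t, hq t]
      simp

theorem leibnizDefect_pow_eq_zero_of_apply_self [IsAddTorsionFree R] {m : ℕ}
    (h : ∀ y, (leibnizDefect y ^ m) f y = 0) (x z : R) : (leibnizDefect x ^ m) f z = 0 := by
  obtain ⟨p, -, hp1, hp⟩ := exists_polynomial_leibnizDefect_pow_apply_self hf m x z
  have hp0 : p = 0 := eq_zero_of_forall_eval_natCast_eq_zero fun t => (hp t).symm.trans (h _)
  rw [hp0, coeff_zero, ← Nat.cast_succ, ← nsmul_eq_mul, eq_comm, nsmul_eq_zero_iff] at hp1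
  exact hp1.resolve_right m.succ_ne_zero

theorem isDerOrd_iff_forall_leibnizDefect_pow_apply_self [IsAddTorsionFree R] (n : ℕ) :
    IsDerOrd R n f ↔ ∀ x, (leibnizDefect x ^ n) f x = 0 := by
  induction n generalizing f with
  | zero => simp only [pow_zero, Module.End.one_apply]; exact funext_iff
  | succ n ih =>
    rw [isDerOrd_succ_iff, and_iff_right hf]
    simp only [ih (leibnizDefect_map_add hf _), leibnizDefect_pow_apply_swap]
    exact ⟨fun h x => h x x, fun h z x => leibnizDefect_pow_eq_zero_of_apply_self hf h x z⟩

end LeibnizDefect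

theorem stmt_12_general {R : Type*} [CommRing R] [Algebra ℚ R] (n : ℕ) (A : R → R)
    (hadd : ∀ x y : R, A (x + y) = A x + A y) :
    IsDerOrd R n A ↔
      ∀ x : R, ∑ i ∈ Finset.range (n + 1),
        (-1 : R) ^ i * ((n + 1).choose i : R) * x ^ i * A (x ^ (n + 1 - i)) = 0 := by
  have := IsAddTorsionFree.of_module_rat R
  simp only [isDerOrd_iff_forall_leibnizDefect_pow_apply_self hadd, leibnizDefect_pow_apply_self]

theorem stmt_12 {R : Type*} [CommRing R] [Algebra ℚ R] (n : ℕ) (hn : 1 ≤ n) (A : R → R)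
    (hadd : ∀ x y : R, A (x + y) = A x + A y) :
    IsDerOrd R n A ↔
      ∀ x : R, ∑ i ∈ Finset.range (n + 1),
        (-1 : R) ^ i * ((n + 1).choose i : R) * x ^ i * A (x ^ (n + 1 - i)) = 0 :=
  stmt_12_general n A hadd
end

section
/- Let R be an integral domain with unity embedded in a field F of characteristic zero, and let A : R → F be additive with A(1) = 0. If there exist constants a₁,…,a_{n+1} ∈ F, not all zero, such that Σ_{i=0}^{n} a_{n+1−i} x^i A(x^{n+1−i}) = 0 for all x ∈ R, and A is not identically zero, then Σ_{i=1}^{n+1} i·a_i = 0 and A is a derivation of order n. -/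
/-- Derivations of order `n` (Reich) on a subring `R` of a field `F`, with values in `F`. -/
def IsDerOrdTo {F : Type*} [Field F] (R : Subring F) : ℕ → (R → F) → Prop
  | 0, f => f = 0
  | n + 1, f => (∀ x y : R, f (x + y) = f x + f y) ∧
      (∀ y : R, IsDerOrdTo R n (fun x => f (x * y) - (x : F) * f y - f x * (y : F))) ∧
      (∀ x : R, IsDerOrdTo R n (fun y => f (x * y) - (x : F) * f y - f x * (y : F)))

open Polynomial Finset

lemma Q1_eval {F : Type*} [Field F] (N k : ℕ) (x' y' m : F) :
    (∑ i ∈ range (N+1), C (((N-k).choose i : F) * x'^(N-k-i) * y'^i) * X^i).eval m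
      = (x' + m * y')^(N-k) := by
  rw [add_comm x' (m * y'), add_pow, eval_finset_sum]
  rw [← Finset.sum_subset (Finset.range_subset_range.2 (by omega : N-k+1 ≤ N+1))]
  · apply Finset.sum_congr rfl
    intro i hi
    simp only [eval_mul, eval_C, eval_pow, eval_X]
    rw [mul_pow]
    ring
  · intro i hi hni
    simp only [Finset.mem_range] at hi hni
    simp [Nat.choose_eq_zero_of_lt (by omega : N-k < i)]

lemma Q2_eval {F : Type*} [Field F] (R : Subring F) (N k : ℕ) (hk : k ≤ N) (Φ : R →+ F)
    (x y : R) (m : ℕ) :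
    (∑ j ∈ range (N+1), C ((k.choose j : F) * Φ (x^(k-j) * y^j)) * X^j).eval (m:F)
      = Φ ((x + (m:R) * y)^k) := by
  have hexp : (x + (m:R)*y)^k = ∑ j ∈ range (k+1), (k.choose j * m^j) • (x^(k-j) * y^j) := by
    rw [add_comm x ((m:R)*y), add_pow]
    apply Finset.sum_congr rfl
    intro j hj
    rw [mul_pow, nsmul_eq_mul]
    push_cast
    ring
  rw [hexp, map_sum, eval_finset_sum]
  rw [← Finset.sum_subset (Finset.range_subset_range.2 (by omega : k+1 ≤ N+1))]
  · apply Finset.sum_congr rfl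
    intro j hj
    rw [map_nsmul, nsmul_eq_mul, eval_mul, eval_C, eval_pow, eval_X]
    push_cast
    ring
  · intro j hj hnj
    simp only [Finset.mem_range] at hj hnj
    simp [Nat.choose_eq_zero_of_lt (show k < j by omega)]

lemma Qcoeff {F : Type*} [Field F] (N : ℕ) (c : ℕ → F) (t : ℕ) (ht : t ≤ N) :
    (∑ i ∈ range (N+1), C (c i) * X^i).coeff t = c t := by
  rw [finset_sum_coeff]
  simp only [coeff_C_mul, coeff_X_pow, mul_ite, mul_one, mul_zero]
  rw [Finset.sum_ite_eq (range (N+1)) t c]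
  simp [Nat.lt_succ_iff, ht]

theorem poly_zero_of_nat_roots {F : Type*} [Field F] [CharZero F] (p : F[X])
    (h : ∀ m : ℕ, p.eval (m:F) = 0) : p = 0 := by
  apply Polynomial.eq_zero_of_infinite_isRoot
  apply Set.Infinite.mono (s := Set.range (fun m : ℕ => (m:F)))
  · rintro _ ⟨m, rfl⟩; exact h m
  · exact Set.infinite_range_of_injective Nat.cast_injective

lemma key {F : Type*} [Field F] [CharZero F] {R : Subring F} (N : ℕ) (hN : 1 ≤ N) (A : R → F)
    (hadd : ∀ x y : R, A (x + y) = A x + A y)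
    (a : ℕ → F)
    (heq : ∀ x : R, ∑ k ∈ Finset.Icc 1 N, a k * (x:F)^(N-k) * A (x^k) = 0)
    (x y : R) :
    ∑ k ∈ Finset.Icc 1 N, a k *
      ((k:F) * (x:F)^(N-k) * A (x^(k-1) * y)
        + ((N-k : ℕ):F) * (x:F)^(N-k-1) * (y:F) * A (x^k)) = 0 := by
  classical
  set Φ : R →+ F := AddMonoidHom.mk' A hadd with hΦdef
  have hΦ : ∀ z, Φ z = A z := fun z => rfl
  set x' : F := (x : F) with hx'
  set y' : F := (y : F) with hy'
  set P : F[X] := ∑ k ∈ Finset.Icc 1 N,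
      C (a k) * ((∑ i ∈ range (N+1), C (((N-k).choose i : F) * x'^(N-k-i) * y'^i) * X^i)
        * (∑ j ∈ range (N+1), C ((k.choose j : F) * Φ (x^(k-j) * y^j)) * X^j)) with hP
  have heval : ∀ m : ℕ, P.eval (m:F) = 0 := by
    intro m
    have hc : ((x + (m:R)*y : R) : F) = x' + (m:F) * y' := by push_cast; ring
    have h1 : P.eval (m:F) = ∑ k ∈ Finset.Icc 1 N,
        a k * (((x + (m:R)*y : R):F)^(N-k) * A ((x + (m:R)*y)^k)) := by
      rw [hP, eval_finset_sum]
      apply Finset.sum_congr rfl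
      intro k hk
      rw [eval_mul, eval_mul, eval_C, Q1_eval, Q2_eval R N k (by simp [Finset.mem_Icc] at hk; omega) Φ x y m, hΦ, hc]
    rw [h1]
    simpa only [mul_assoc] using heq (x + (m:R)*y)
  have hP0 : P = 0 := poly_zero_of_nat_roots P heval
  have hc1 : P.coeff 1 = 0 := by rw [hP0]; simp
  rw [hP, finset_sum_coeff] at hc1
  rw [← hc1]
  apply Finset.sum_congr rfl
  intro k hk
  simp only [Finset.mem_Icc] at hk
  rw [coeff_C_mul, coeff_mul, Finset.Nat.sum_antidiagonal_eq_sum_range_succ_mk]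
  rw [Finset.sum_range_succ, Finset.sum_range_one]
  rw [Qcoeff N _ 0 (by omega), Qcoeff N _ 1 hN, Qcoeff N _ 1 hN, Qcoeff N _ 0 (by omega)]
  simp only [Nat.choose_zero_right, Nat.choose_one_right, Nat.cast_one, pow_zero,
    Nat.sub_zero, pow_one, one_mul, mul_one, hΦ]
  ring

lemma zero_isDerOrd {F : Type*} [Field F] (R : Subring F) : ∀ n, IsDerOrdTo R n (0 : R → F) := by
  intro n
  induction n with
  | zero => rfl
  | succ n ih =>
    refine ⟨fun x y => by simp, fun y => ?_, fun x => ?_⟩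
    · have h : (fun x : R => (0:R→F) (x * y) - (x:F) * (0:R→F) y - (0:R→F) x * (y:F)) = (0:R→F) := by
        funext z; simp
      rw [h]; exact ih
    · have h : (fun y : R => (0:R→F) (x * y) - (x:F) * (0:R→F) y - (0:R→F) x * (y:F)) = (0:R→F) := by
        funext z; simp
      rw [h]; exact ih


lemma main {F : Type*} [Field F] [CharZero F] (R : Subring F) :
    ∀ N : ℕ, 1 ≤ N → ∀ A : R → F, (∀ x y : R, A (x+y) = A x + A y) → A 1 = 0 →
    ∀ a : ℕ → F, (∃ j ∈ Finset.Icc 1 N, a j ≠ 0) →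
    (∀ x : R, ∑ k ∈ Finset.Icc 1 N, a k * (x:F)^(N-k) * A (x^k) = 0) →
    A ≠ 0 →
    (∑ k ∈ Finset.Icc 1 N, (k:F) * a k = 0) ∧ IsDerOrdTo R (N-1) A := by
  intro N hN1
  induction N, hN1 using Nat.le_induction with
  | base =>
    intro A hadd h1 a hne heq hA
    exfalso
    obtain ⟨j, hj, hja⟩ := hne
    have hj1 : j = 1 := by simp [Finset.mem_Icc] at hj; omega
    subst hj1
    apply hA
    funext z
    have h := heq z
    simp only [Finset.Icc_self, Finset.sum_singleton, Nat.sub_self, pow_zero, pow_one,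
      mul_one, one_mul] at h
    have : A z = 0 := by
      rcases mul_eq_zero.mp h with h' | h'
      · exact absurd h' hja
      · exact h'
    simpa using this
  | succ N hN ih =>
    intro A hadd h1 a hne heq hA
    have h0 : A 0 = 0 := by
      have h := hadd 0 0
      rw [add_zero] at h
      exact (left_eq_add.mp h)
    have hzex : ∃ z, A z ≠ 0 := by
      by_contra hc
      push_neg at hc
      exact hA (funext fun z => hc z)
    obtain ⟨z, hz⟩ := hzex
    have hkey := fun (x y : R) => key (N+1) (by omega) A hadd a heq x y
    -- Part 1 : ∑ k * a k = 0
    have part1 : ∑ k ∈ Finset.Icc 1 (N+1), (k:F) * a k = 0 := by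
      have h := hkey 1 z
      simp only [OneMemClass.coe_one, one_pow, one_mul, mul_one, one_pow] at h
      simp only [h1, mul_zero, add_zero] at h
      have h2 : (∑ k ∈ Finset.Icc 1 (N+1), (k:F) * a k) * A z = 0 := by
        rw [Finset.sum_mul, ← h]
        apply Finset.sum_congr rfl
        intro k hk
        ring
      rcases mul_eq_zero.mp h2 with h' | h'
      · exact h'
      · exact absurd h' hz
    by_cases hall : ∀ k, 2 ≤ k → k ≤ N+1 → a k = 0
    · exfalso
      have ha1 : a 1 ≠ 0 := by
        obtain ⟨j, hj, hja⟩ := hne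
        simp only [Finset.mem_Icc] at hj
        rcases Nat.eq_or_lt_of_le hj.1 with h' | h'
        · rwa [h']
        · exact absurd (hall j h' hj.2) hja
      apply hA
      funext w
      by_cases hw : w = 0
      · simpa [hw] using h0
      · have h := heq w
        rw [Finset.sum_eq_single 1 (fun k hk hk1 => by
          simp only [Finset.mem_Icc] at hk
          rw [hall k (by omega) hk.2]; ring) (by simp)] at h
        have hw' : (w:F) ≠ 0 := fun hc => hw (by
          ext; simpa using hc)
        have : A (w^1) = 0 := by
          have hp : (w:F)^(N+1-1) ≠ 0 := pow_ne_zero _ hw'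
          rcases mul_eq_zero.mp h with h' | h'
          · rcases mul_eq_zero.mp h' with h'' | h''
            · exact absurd h'' ha1
            · exact absurd h'' hp
          · exact h'
        simpa using this
    · push_neg at hall
      obtain ⟨k₀, hk₀2, hk₀le, hk₀⟩ := hall
      set B : R → R → F := fun y x => A (x * y) - (x:F) * A y - A x * (y:F) with hB
      have hB1 : ∀ y, B y 1 = 0 := by
        intro y; simp [hB, h1]
      have hBadd : ∀ y x1 x2, B y (x1+x2) = B y x1 + B y x2 := by
        intro y x1 x2
        simp only [hB, add_mul, hadd]
        push_cast
        ring
      set a' : ℕ → F := fun l => ((l + 1 : ℕ) : F) * a (l+1) with ha'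
      have hBeq : ∀ y x : R,
          ∑ l ∈ Finset.Icc 1 N, a' l * (x:F)^(N-l) * B y (x^l) = 0 := by
        intro y x
        have K1 := hkey x y
        have K2 := hkey x 1
        simp only [OneMemClass.coe_one, mul_one, one_mul] at K2
        have step1 : ∑ k ∈ Finset.Icc 1 (N+1),
            (k:F) * a k * (x:F)^(N+1-k) * B y (x^(k-1)) = 0 := by
          have e : ∑ k ∈ Finset.Icc 1 (N+1), (k:F) * a k * (x:F)^(N+1-k) * B y (x^(k-1))
              = (∑ k ∈ Finset.Icc 1 (N+1), a k *
                  ((k:F) * (x:F)^(N+1-k) * A (x^(k-1) * y)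
                    + ((N+1-k : ℕ):F) * (x:F)^(N+1-k-1) * (y:F) * A (x^k)))
                - (y:F) * (∑ k ∈ Finset.Icc 1 (N+1), a k *
                  ((k:F) * (x:F)^(N+1-k) * A (x^(k-1))
                    + ((N+1-k : ℕ):F) * (x:F)^(N+1-k-1) * A (x^k)))
                - (∑ k ∈ Finset.Icc 1 (N+1), (k:F) * a k) * ((x:F)^N * A y) := by
            rw [Finset.mul_sum, Finset.sum_mul, ← Finset.sum_sub_distrib, ← Finset.sum_sub_distrib]
            apply Finset.sum_congr rfl
            intro k hk
            simp only [Finset.mem_Icc] at hk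
            have hxp : ((x:F))^N = (x:F)^(N+1-k) * (x:F)^(k-1) := by
              rw [← pow_add]; congr 1; omega
            simp only [hB]
            rw [hxp]
            push_cast
            ring
          rw [e, K1, K2, part1]
          ring
        have hsplit : ∑ k ∈ Finset.Icc 1 (N+1),
            (k:F) * a k * (x:F)^(N+1-k) * B y (x^(k-1))
            = ∑ k ∈ Finset.Icc 2 (N+1), (k:F) * a k * (x:F)^(N+1-k) * B y (x^(k-1)) := by
          apply (Finset.sum_subset (Finset.Icc_subset_Icc_left (by omega)) ?_).symm
          intro k hk hk2
          have hk1 : k = 1 := by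
            simp only [Finset.mem_Icc] at hk hk2; omega
          subst hk1
          simp [hB1 y]
        have hre : ∑ l ∈ Finset.Icc 1 N, a' l * (x:F)^(N-l) * B y (x^l)
            = ∑ k ∈ Finset.Icc 2 (N+1), (k:F) * a k * (x:F)^(N+1-k) * B y (x^(k-1)) := by
          apply Finset.sum_nbij' (fun l => l + 1) (fun k => k - 1)
          · intro l hl; simp only [Finset.mem_Icc] at *; omega
          · intro k hk; simp only [Finset.mem_Icc] at *; omega
          · intro l hl; omega
          · intro k hk; simp only [Finset.mem_Icc] at hk; omega
          · intro l hl
            simp only [ha', Nat.add_sub_cancel, Nat.succ_sub_succ_eq_sub, Nat.sub_zero]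
        rw [hre, ← hsplit, step1]
      have hne' : ∃ j ∈ Finset.Icc 1 N, a' j ≠ 0 := by
        refine ⟨k₀ - 1, by simp only [Finset.mem_Icc]; omega, ?_⟩
        simp only [ha']
        rw [Nat.sub_add_cancel (by omega)]
        exact mul_ne_zero (Nat.cast_ne_zero.2 (by omega)) hk₀
      have hderB : ∀ y, IsDerOrdTo R (N-1) (B y) := by
        intro y
        by_cases hBy : B y = 0
        · rw [hBy]; exact zero_isDerOrd R (N-1)
        · exact (ih (B y) (hBadd y) (hB1 y) a' hne' (hBeq y) hBy).2
      refine ⟨part1, ?_⟩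
      obtain ⟨M, rfl⟩ : ∃ M, N = M + 1 := ⟨N-1, by omega⟩
      show IsDerOrdTo R (M+1) A
      refine ⟨hadd, fun y => ?_, fun x => ?_⟩
      · exact hderB y
      · have hsymm : (fun w : R => A (x * w) - (x:F) * A w - A x * (w:F)) = B x := by
          funext w
          simp only [hB]
          rw [mul_comm]
          ring
        rw [hsymm]
        exact hderB x

theorem stmt_13 {F : Type*} [Field F] [CharZero F] (R : Subring F)
    (n : ℕ) (hn : 1 ≤ n) (A : R → F)
    (hadd : ∀ x y : R, A (x + y) = A x + A y) (h1 : A 1 = 0)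
    (a : ℕ → F) (hne : ∃ j ∈ Finset.Icc 1 (n + 1), a j ≠ 0)
    (heq : ∀ x : R, ∑ i ∈ Finset.range (n + 1),
      a (n + 1 - i) * (x : F) ^ i * A (x ^ (n + 1 - i)) = 0)
    (hA : A ≠ 0) :
    (∑ i ∈ Finset.Icc 1 (n + 1), (i : F) * a i = 0) ∧ IsDerOrdTo R n A := by
  have heq' : ∀ x : R, ∑ k ∈ Finset.Icc 1 (n+1), a k * (x:F)^(n+1-k) * A (x^k) = 0 := by
    intro x
    rw [← heq x]
    apply Finset.sum_nbij' (fun k => n + 1 - k) (fun i => n + 1 - i)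
    · intro k hk; simp only [Finset.mem_Icc, Finset.mem_range] at *; omega
    · intro i hi; simp only [Finset.mem_Icc, Finset.mem_range] at *; omega
    · intro k hk; simp only [Finset.mem_Icc] at hk; omega
    · intro i hi; simp only [Finset.mem_range] at hi; omega
    · intro k hk
      simp only [Finset.mem_Icc] at hk
      have hkk : n + 1 - (n + 1 - k) = k := by omega
      rw [hkk]
  obtain ⟨hs, hd⟩ := main R (n+1) (by omega) A hadd h1 a hne heq' hA
  exact ⟨hs, hd⟩
end

section
/- Let R be a commutative ℚ-algebra with unit and f₁, f₂ : R → R additive functions with f₁(1) = f₂(1) = 0 satisfying 2f₂(xy) + x·f₁(y) + y·f₁(x) = 0 for all x, y ∈ R. Then f₂ is a derivation and f₁ = −2f₂. -/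
theorem stmt_14 {R : Type*} [CommRing R] [Algebra ℚ R] (f₁ f₂ : R → R)
    (hadd1 : ∀ x y : R, f₁ (x + y) = f₁ x + f₁ y)
    (hadd2 : ∀ x y : R, f₂ (x + y) = f₂ x + f₂ y)
    (h1 : f₁ 1 = 0) (h2 : f₂ 1 = 0)
    (heq : ∀ x y : R, 2 * f₂ (x * y) + x * f₁ y + y * f₁ x = 0) :
    (∀ x y : R, f₂ (x * y) = x * f₂ y + f₂ x * y) ∧ (∀ x : R, f₁ x = -(2 * f₂ x)) := by
  have key : ∀ a : R, (2⁻¹ : ℚ) • (2 * a) = a := by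
    intro a
    rw [show (2:R) = algebraMap ℚ R 2 from (map_ofNat (algebraMap ℚ R) 2).symm, Algebra.smul_def, ← mul_assoc, ← map_mul]
    norm_num
  have hcancel : ∀ a b : R, 2 * a = 2 * b → a = b := by
    intro a b h
    have := congrArg (fun r => (2⁻¹ : ℚ) • r) h
    simpa [key] using this
  have hf1 : ∀ x : R, f₁ x = -(2 * f₂ x) := by
    intro x
    have := heq x 1
    rw [mul_one, h1, mul_zero] at this
    linear_combination this
  refine ⟨fun x y => ?_, hf1⟩
  have := heq x y
  rw [hf1 x, hf1 y] at this
  apply hcancel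
  linear_combination this
end

section
/- Let R be a commutative ℚ-algebra with unit (or an integral domain embeddable in a char-0 field) and let f : R → R be additive, not identically zero, with f(x³) + x·f(x²) − 2x²·f(x) = 0 for all x ∈ R. Then f(x) = f(1)·x for all x ∈ R, and f(1) ≠ 0. -/
/-!
Replace `x` by `x + 1` and `x - 1` in the functional equation and subtract twice the equation
at `x`: the terms in `f (x ^ 3)`, `f (x ^ 2)` and `f x` cancel and what is left is
`6 * (f x - f 1 * x) = 0`. Since `6` is invertible in a `ℚ`-algebra, `f x = f 1 * x`.
-/

namespace AddMonoidHom

variable {R : Type*} [CommRing R]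

theorem six_mul_sub_apply_one_mul_eq_zero (f : R →+ R)
    (heq : ∀ x : R, f (x ^ 3) + x * f (x ^ 2) - 2 * x ^ 2 * f x = 0) (x : R) :
    6 * (f x - f 1 * x) = 0 := by
  have at_add := heq (x + 1)
  rw [show (x + 1) ^ 3 = x ^ 3 + (3 : ℕ) • x ^ 2 + (3 : ℕ) • x + 1 by ring,
    show (x + 1) ^ 2 = x ^ 2 + (2 : ℕ) • x + 1 by ring] at at_add
  have at_sub := heq (x - 1)
  rw [show (x - 1) ^ 3 = x ^ 3 - (3 : ℕ) • x ^ 2 + (3 : ℕ) • x - 1 by ring,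
    show (x - 1) ^ 2 = x ^ 2 - (2 : ℕ) • x + 1 by ring] at at_sub
  simp only [map_add, map_sub, map_nsmul] at at_add at_sub
  linear_combination at_add + at_sub - 2 * heq x

theorem apply_eq_apply_one_mul_of_isUnit_six (f : R →+ R) (hsix : IsUnit (6 : R))
    (heq : ∀ x : R, f (x ^ 3) + x * f (x ^ 2) - 2 * x ^ 2 * f x = 0) (x : R) :
    f x = f 1 * x :=
  sub_eq_zero.mp (hsix.mul_right_eq_zero.mp (f.six_mul_sub_apply_one_mul_eq_zero heq x))

end AddMonoidHom

theorem isUnit_six_of_algebra_rat (R : Type*) [Semiring R] [Algebra ℚ R] : IsUnit (6 : R) := by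
  simpa only [map_ofNat] using (IsUnit.mk0 (6 : ℚ) (by norm_num)).map (algebraMap ℚ R)

theorem stmt_15 {R : Type*} [CommRing R] [Algebra ℚ R] (f : R → R)
    (hadd : ∀ x y : R, f (x + y) = f x + f y)
    (hne : f ≠ 0)
    (heq : ∀ x : R, f (x ^ 3) + x * f (x ^ 2) - 2 * x ^ 2 * f x = 0) :
    (∀ x : R, f x = f 1 * x) ∧ f 1 ≠ 0 := by
  have linear : ∀ x : R, f x = f 1 * x :=
    (AddMonoidHom.mk' f hadd).apply_eq_apply_one_mul_of_isUnit_six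
      (isUnit_six_of_algebra_rat R) heq
  refine ⟨linear, fun h1 => hne (funext fun x => ?_)⟩
  rw [linear x, h1, zero_mul, Pi.zero_apply]
end

section
/- Let R be a commutative ℚ-algebra with unit and let f, g : R → R be additive with f(1) = g(1) = 0 and f(x³) + x²·g(x) = 0 for all x ∈ R. Then there exists a derivation D : R → R such that 3f = D and g = −D. -/
theorem stmt_16 {R : Type*} [CommRing R] [Algebra ℚ R] (f g : R → R)
    (haddf : ∀ x y : R, f (x + y) = f x + f y)
    (haddg : ∀ x y : R, g (x + y) = g x + g y)
    (hf1 : f 1 = 0) (hg1 : g 1 = 0)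
    (heq : ∀ x : R, f (x ^ 3) + x ^ 2 * g x = 0) :
    ∃ D : R → R, (∀ x y : R, D (x + y) = D x + D y) ∧
      (∀ x y : R, D (x * y) = x * D y + D x * y) ∧
      (∀ x : R, 3 * f x = D x) ∧ (∀ x : R, g x = -D x) := by
  -- cancellation of nonzero integer factors, using the ℚ-vector space structure
  have hcan : ∀ (n : ℕ) (a b : R), n ≠ 0 → (n : R) * a = (n : R) * b → a = b := by
    intro n a b hn h
    have h' : (n : ℚ) • a = (n : ℚ) • b := by
      rw [show ((n : ℚ)) = ((n : ℕ) : ℚ) from by norm_num,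
        Nat.cast_smul_eq_nsmul, Nat.cast_smul_eq_nsmul]
      simpa [nsmul_eq_mul] using h
    have := congrArg (fun r => ((n : ℚ))⁻¹ • r) h'
    simpa [smul_smul, inv_mul_cancel₀ (show (n : ℚ) ≠ 0 by exact_mod_cast hn)] using this
  have hf0 : f 0 = 0 := by have := haddf 0 0; simpa using this
  have hg0 : g 0 = 0 := by have := haddg 0 0; simpa using this
  have hfneg : ∀ x : R, f (-x) = -f x := by
    intro x
    have := haddf x (-x); rw [add_neg_cancel, hf0] at this; linear_combination -this
  have hgneg : ∀ x : R, g (-x) = -g x := by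
    intro x
    have := haddg x (-x); rw [add_neg_cancel, hg0] at this; linear_combination -this
  have hA : ∀ x : R, 3 * f (x ^ 2) + 3 * f x = -(2 * x * g x) - g x := by
    intro x
    have h1 := heq (x + 1)
    have h0 := heq x
    have e3 : (x + 1) ^ 3 = x ^ 3 + (x ^ 2 + x ^ 2 + x ^ 2 + (x + x + x) + 1) := by ring
    rw [e3] at h1
    simp only [haddf, haddg, hf1, hg1] at h1
    linear_combination h1 - h0
  have hA' : ∀ x : R, 3 * f (x ^ 2) - 3 * f x = -(2 * x * g x) + g x := by
    intro x
    have h := hA (-x)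
    rw [neg_sq, hfneg, hgneg] at h
    linear_combination h
  have hg : ∀ x : R, g x = -(3 * f x) := by
    intro x
    have h1 := hA x
    have h2 := hA' x
    exact hcan 2 _ _ (by norm_num) (by push_cast; linear_combination h1 - h2)
  have hsq : ∀ x : R, f (x ^ 2) = 2 * x * f x := by
    intro x
    have h1 := hA x
    have h2 := hA' x
    rw [hg x] at h1 h2
    exact hcan 6 _ _ (by norm_num) (by push_cast; linear_combination h1 + h2)
  have hmul : ∀ x y : R, f (x * y) = x * f y + f x * y := by
    intro x y
    have h := hsq (x + y)
    have e2 : (x + y) ^ 2 = x ^ 2 + (x * y + (x * y + y ^ 2)) := by ring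
    rw [e2] at h
    simp only [haddf] at h
    rw [hsq x, hsq y] at h
    exact hcan 2 _ _ (by norm_num) (by push_cast; linear_combination h)
  refine ⟨fun x => 3 * f x, ?_, ?_, ?_, ?_⟩
  · intro x y; dsimp only; rw [haddf]; ring
  · intro x y; dsimp only; linear_combination 3 * hmul x y
  · intro x; rfl
  · intro x; dsimp only; rw [hg]
end

section
/- Let R be a commutative ℚ-algebra with unit and let f, g, h : R → R be additive functions with f(1) = g(1) = h(1) = 0 satisfying f(x⁵) + x·g(x⁴) + x⁴·h(x) = 0 for all x ∈ R. Then there exist a derivation D₁ ∈ D₁(R) and a second-order derivation D₂ ∈ D₂(R) such that 15f = 2D₁ + 9D₂, 3g = −D₁ − 3D₂, and 3h = 2D₁ + 3D₂. -/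
section Aux

variable {R : Type*} [CommRing R]

lemma aux_int (φ : R → R) (hadd : ∀ x y : R, φ (x + y) = φ x + φ y)
    (n : ℤ) (a : R) : φ ((n : R) * a) = (n : R) * φ a := by
  have := map_zsmul (AddMonoidHom.mk' φ hadd) n a
  simpa [zsmul_eq_mul] using this

lemma aux_two (φ : R → R) (hadd : ∀ x y : R, φ (x + y) = φ x + φ y)
    (a : R) : φ (2 * a) = 2 * φ a := by
  have := aux_int φ hadd 2 a; simpa using this

lemma aux_three (φ : R → R) (hadd : ∀ x y : R, φ (x + y) = φ x + φ y)
    (a : R) : φ (3 * a) = 3 * φ a := by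
  have := aux_int φ hadd 3 a; simpa using this

lemma aux_six (φ : R → R) (hadd : ∀ x y : R, φ (x + y) = φ x + φ y)
    (a : R) : φ (6 * a) = 6 * φ a := by
  have := aux_int φ hadd 6 a; simpa using this

lemma exp5 (φ : R → R) (hadd : ∀ x y : R, φ (x + y) = φ x + φ y)
    (n : ℤ) (x : R) :
    φ ((x + (n : R)) ^ 5) = φ (x ^ 5) + ((5 * n : ℤ) : R) * φ (x ^ 4)
      + ((10 * n ^ 2 : ℤ) : R) * φ (x ^ 3) + ((10 * n ^ 3 : ℤ) : R) * φ (x ^ 2)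
      + ((5 * n ^ 4 : ℤ) : R) * φ x + ((n ^ 5 : ℤ) : R) * φ 1 := by
  have e : (x + (n : R)) ^ 5 = x ^ 5 + (((5 * n : ℤ) : R) * x ^ 4
      + (((10 * n ^ 2 : ℤ) : R) * x ^ 3 + (((10 * n ^ 3 : ℤ) : R) * x ^ 2
      + (((5 * n ^ 4 : ℤ) : R) * x + ((n ^ 5 : ℤ) : R) * 1)))) := by
    push_cast; ring
  rw [e]
  simp only [hadd, aux_int φ hadd]
  ring

lemma exp4 (φ : R → R) (hadd : ∀ x y : R, φ (x + y) = φ x + φ y)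
    (n : ℤ) (x : R) :
    φ ((x + (n : R)) ^ 4) = φ (x ^ 4) + ((4 * n : ℤ) : R) * φ (x ^ 3)
      + ((6 * n ^ 2 : ℤ) : R) * φ (x ^ 2) + ((4 * n ^ 3 : ℤ) : R) * φ x
      + ((n ^ 4 : ℤ) : R) * φ 1 := by
  have e : (x + (n : R)) ^ 4 = x ^ 4 + (((4 * n : ℤ) : R) * x ^ 3
      + (((6 * n ^ 2 : ℤ) : R) * x ^ 2 + (((4 * n ^ 3 : ℤ) : R) * x
      + ((n ^ 4 : ℤ) : R) * 1))) := by
    push_cast; ring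
  rw [e]
  simp only [hadd, aux_int φ hadd]
  ring

lemma exp1 (φ : R → R) (hadd : ∀ x y : R, φ (x + y) = φ x + φ y)
    (n : ℤ) (x : R) :
    φ (x + (n : R)) = φ x + (n : R) * φ 1 := by
  have e : x + (n : R) = x + (n : R) * 1 := by ring
  rw [e, hadd, aux_int φ hadd]

lemma expsq (φ : R → R) (hadd : ∀ x y : R, φ (x + y) = φ x + φ y)
    (a b : R) : φ ((a + b) ^ 2) = φ (a ^ 2) + 2 * φ (a * b) + φ (b ^ 2) := by
  have e : (a + b) ^ 2 = a ^ 2 + (2 * (a * b) + b ^ 2) := by ring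
  rw [e]
  simp only [hadd, aux_two φ hadd]
  ring

lemma expcb (φ : R → R) (hadd : ∀ x y : R, φ (x + y) = φ x + φ y)
    (a b : R) :
    φ ((a + b) ^ 3) = φ (a ^ 3) + 3 * φ (a ^ 2 * b) + 3 * φ (b ^ 2 * a) + φ (b ^ 3) := by
  have e : (a + b) ^ 3 = a ^ 3 + (3 * (a ^ 2 * b) + (3 * (b ^ 2 * a) + b ^ 3)) := by ring
  rw [e]
  simp only [hadd, aux_three φ hadd]
  ring

lemma expsq3 (φ : R → R) (hadd : ∀ x y : R, φ (x + y) = φ x + φ y)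
    (x y z : R) : φ ((x + y + z) ^ 2) = φ (x ^ 2) + φ (y ^ 2) + φ (z ^ 2)
      + 2 * φ (x * y) + 2 * φ (x * z) + 2 * φ (y * z) := by
  have e : (x + y + z) ^ 2 = x ^ 2 + (y ^ 2 + (z ^ 2 + (2 * (x * y)
      + (2 * (x * z) + 2 * (y * z))))) := by ring
  rw [e]
  simp only [hadd, aux_two φ hadd]
  ring

lemma expcb3 (φ : R → R) (hadd : ∀ x y : R, φ (x + y) = φ x + φ y)
    (x y z : R) : φ ((x + y + z) ^ 3) = φ (x ^ 3) + φ (y ^ 3) + φ (z ^ 3)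
      + 3 * φ (x ^ 2 * y) + 3 * φ (x ^ 2 * z) + 3 * φ (y ^ 2 * x) + 3 * φ (y ^ 2 * z)
      + 3 * φ (z ^ 2 * x) + 3 * φ (z ^ 2 * y) + 6 * φ (x * y * z) := by
  have e : (x + y + z) ^ 3 = x ^ 3 + (y ^ 3 + (z ^ 3 + (3 * (x ^ 2 * y)
      + (3 * (x ^ 2 * z) + (3 * (y ^ 2 * x) + (3 * (y ^ 2 * z)
      + (3 * (z ^ 2 * x) + (3 * (z ^ 2 * y) + 6 * (x * y * z))))))))) := by ring
  rw [e]
  simp only [hadd, aux_three φ hadd, aux_six φ hadd]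
  ring

end Aux

section Cancel

variable {R : Type*} [CommRing R] [Algebra ℚ R]

lemma cancel_nat (n : ℕ) (hn : (n : ℚ) ≠ 0) {r : R} (hr : (n : R) * r = 0) : r = 0 := by
  have h1 : r = algebraMap ℚ R ((n : ℚ)⁻¹) * ((n : R) * r) := by
    rw [← map_natCast (algebraMap ℚ R) n, ← mul_assoc, ← map_mul,
      inv_mul_cancel₀ hn, map_one, one_mul]
  rw [h1, hr, mul_zero]

lemma cancel_eq (n : ℕ) (hn : (n : ℚ) ≠ 0) {a b : R}
    (hr : (n : R) * (a - b) = 0) : a = b :=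
  sub_eq_zero.mp (cancel_nat n hn hr)

end Cancel

theorem stmt_17 {R : Type*} [CommRing R] [Algebra ℚ R] (f g h : R → R)
    (haddf : ∀ x y : R, f (x + y) = f x + f y)
    (haddg : ∀ x y : R, g (x + y) = g x + g y)
    (haddh : ∀ x y : R, h (x + y) = h x + h y)
    (hf1 : f 1 = 0) (hg1 : g 1 = 0) (hh1 : h 1 = 0)
    (heq : ∀ x : R, f (x ^ 5) + x * g (x ^ 4) + x ^ 4 * h x = 0) :
    ∃ D₁ D₂ : R → R, IsDerOrd R 1 D₁ ∧ IsDerOrd R 2 D₂ ∧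
      (∀ x : R, 15 * f x = 2 * D₁ x + 9 * D₂ x) ∧
      (∀ x : R, 3 * g x = -D₁ x - 3 * D₂ x) ∧
      (∀ x : R, 3 * h x = 2 * D₁ x + 3 * D₂ x) := by
  -- the shifted equations
  have E : ∀ (n : ℤ) (x : R),
      f (x ^ 5) + ((5 * n : ℤ) : R) * f (x ^ 4) + ((10 * n ^ 2 : ℤ) : R) * f (x ^ 3)
        + ((10 * n ^ 3 : ℤ) : R) * f (x ^ 2) + ((5 * n ^ 4 : ℤ) : R) * f x
        + (x + (n : R)) * (g (x ^ 4) + ((4 * n : ℤ) : R) * g (x ^ 3)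
            + ((6 * n ^ 2 : ℤ) : R) * g (x ^ 2) + ((4 * n ^ 3 : ℤ) : R) * g x)
        + (x + (n : R)) ^ 4 * h x = 0 := by
    intro n x
    have h0 := heq (x + (n : R))
    rw [exp5 f haddf, exp4 g haddg, exp1 h haddh, hf1, hg1, hh1] at h0
    linear_combination h0
  -- the extracted one-variable relations
  have R4 : ∀ x : R, 5 * f x + 4 * g x + h x = 0 := by
    intro x
    have e1 := E 1 x; have em1 := E (-1) x; have e2 := E 2 x
    have em2 := E (-2) x; have e0 := heq x
    push_cast at e1 em1 e2 em2
    refine cancel_nat 24 (by norm_num) ?_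
    linear_combination e2 + em2 - 4 * e1 - 4 * em1 + 6 * e0
  have R3 : ∀ x : R, 5 * f (x ^ 2) + 3 * g (x ^ 2) + 2 * x * g x + 2 * x * h x = 0 := by
    intro x
    have e1 := E 1 x; have em1 := E (-1) x; have e2 := E 2 x; have em2 := E (-2) x
    push_cast at e1 em1 e2 em2
    refine cancel_nat 24 (by norm_num) ?_
    linear_combination e2 - em2 - 2 * e1 + 2 * em1
  have R2 : ∀ x : R, 10 * f (x ^ 3) + 6 * x * g (x ^ 2) + 4 * g (x ^ 3)
      + 6 * x ^ 2 * h x = 0 := by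
    intro x
    have e1 := E 1 x; have em1 := E (-1) x; have e0 := heq x
    push_cast at e1 em1
    refine cancel_nat 2 (by norm_num) ?_
    linear_combination e1 + em1 - 2 * e0 - 2 * R4 x
  -- D = g + h satisfies D(x^2) = 2 x D(x)
  have hDsq : ∀ t : R, g (t ^ 2) + h (t ^ 2) = 2 * t * (g t + h t) := by
    intro t
    linear_combination R4 (t ^ 2) - R3 t
  -- Leibniz rule for D
  have hL : ∀ x y : R, g (x * y) + h (x * y) = x * (g y + h y) + y * (g x + h x) := by
    intro x y
    refine cancel_eq 2 (by norm_num) ?_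
    linear_combination hDsq (x + y) - hDsq x - hDsq y - expsq g haddg x y
      - expsq h haddh x y + (2 * (x + y)) * (haddg x y) + (2 * (x + y)) * (haddh x y)
  have hDcube : ∀ x : R, g (x ^ 3) + h (x ^ 3) = 3 * x ^ 2 * (g x + h x) := by
    intro x
    have h1 := hL x (x ^ 2)
    rw [show x * x ^ 2 = x ^ 3 by ring] at h1
    linear_combination h1 + x * hDsq x
  -- key relation for g
  have hC : ∀ x : R, g (x ^ 3) = 3 * x * g (x ^ 2) - 3 * x ^ 2 * g x := by
    intro x
    refine cancel_eq 2 (by norm_num) ?_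
    linear_combination 2 * R4 (x ^ 3) - R2 x - 2 * hDcube x
  -- second-order identity for g
  have hTg : ∀ x y z : R, g (x * y * z) - x * g (y * z) - y * g (x * z) - z * g (x * y)
      + x * y * g z + x * z * g y + y * z * g x = 0 := by
    intro x y z
    refine cancel_nat 6 (by norm_num) ?_
    have Xadd3 : g (x + y + z) = g x + g y + g z := by rw [haddg, haddg]
    linear_combination (hC (x + y + z) - expcb3 g haddg x y z
        + (3 * (x + y + z)) * expsq3 g haddg x y z - (3 * (x + y + z) ^ 2) * Xadd3)
      - (hC (x + y) - expcb g haddg x y + (3 * (x + y)) * expsq g haddg x y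
        - (3 * (x + y) ^ 2) * haddg x y)
      - (hC (x + z) - expcb g haddg x z + (3 * (x + z)) * expsq g haddg x z
        - (3 * (x + z) ^ 2) * haddg x z)
      - (hC (y + z) - expcb g haddg y z + (3 * (y + z)) * expsq g haddg y z
        - (3 * (y + z) ^ 2) * haddg y z)
      + hC x + hC y + hC z
  -- second-order identity for D (trivial since D is a derivation)
  have hTD : ∀ x y z : R, (g (x * y * z) + h (x * y * z)) - x * (g (y * z) + h (y * z))
      - y * (g (x * z) + h (x * z)) - z * (g (x * y) + h (x * y))
      + x * y * (g z + h z) + x * z * (g y + h y) + y * z * (g x + h x) = 0 := by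
    intro x y z
    linear_combination hL (x * y) z - x * hL y z - y * hL x z
  -- second-order identity for h
  have hTh : ∀ x y z : R, h (x * y * z) - x * h (y * z) - y * h (x * z) - z * h (x * y)
      + x * y * h z + x * z * h y + y * z * h x = 0 := by
    intro x y z
    linear_combination hTD x y z - hTg x y z
  refine ⟨fun x => 3 * (g x + h x), fun x => -(2 * g x + h x), ?_, ?_, ?_, ?_, ?_⟩
  · -- D₁ is a derivation
    refine ⟨fun x y => by simp only [haddg, haddh]; ring, fun y => ?_, fun x => ?_⟩
    · funext x
      show 3 * (g (x * y) + h (x * y)) - x * (3 * (g y + h y))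
          - 3 * (g x + h x) * y = 0
      linear_combination 3 * hL x y
    · funext y
      show 3 * (g (x * y) + h (x * y)) - x * (3 * (g y + h y))
          - 3 * (g x + h x) * y = 0
      linear_combination 3 * hL x y
  · -- D₂ is a second order derivation
    refine ⟨fun x y => by simp only [haddg, haddh]; ring, fun y => ?_, fun x => ?_⟩
    · refine ⟨fun a b => ?_, fun z => ?_, fun x => ?_⟩
      · show -(2 * g ((a + b) * y) + h ((a + b) * y)) - (a + b) * -(2 * g y + h y)
            - -(2 * g (a + b) + h (a + b)) * y
            = (-(2 * g (a * y) + h (a * y)) - a * -(2 * g y + h y)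
              - -(2 * g a + h a) * y)
            + (-(2 * g (b * y) + h (b * y)) - b * -(2 * g y + h y)
              - -(2 * g b + h b) * y)
        simp only [add_mul, haddg, haddh]; ring
      · funext x
        show (-(2 * g (x * z * y) + h (x * z * y)) - (x * z) * -(2 * g y + h y)
              - -(2 * g (x * z) + h (x * z)) * y)
            - x * (-(2 * g (z * y) + h (z * y)) - z * -(2 * g y + h y)
              - -(2 * g z + h z) * y)
            - (-(2 * g (x * y) + h (x * y)) - x * -(2 * g y + h y)
              - -(2 * g x + h x) * y) * z = 0
        linear_combination (-2 : R) * hTg x z y - hTh x z y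
      · funext z
        show (-(2 * g (x * z * y) + h (x * z * y)) - (x * z) * -(2 * g y + h y)
              - -(2 * g (x * z) + h (x * z)) * y)
            - x * (-(2 * g (z * y) + h (z * y)) - z * -(2 * g y + h y)
              - -(2 * g z + h z) * y)
            - (-(2 * g (x * y) + h (x * y)) - x * -(2 * g y + h y)
              - -(2 * g x + h x) * y) * z = 0
        linear_combination (-2 : R) * hTg x z y - hTh x z y
    · refine ⟨fun a b => ?_, fun y => ?_, fun y => ?_⟩
      · show -(2 * g (x * (a + b)) + h (x * (a + b))) - x * -(2 * g (a + b) + h (a + b))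
            - -(2 * g x + h x) * (a + b)
            = (-(2 * g (x * a) + h (x * a)) - x * -(2 * g a + h a)
              - -(2 * g x + h x) * a)
            + (-(2 * g (x * b) + h (x * b)) - x * -(2 * g b + h b)
              - -(2 * g x + h x) * b)
        simp only [mul_add, haddg, haddh]; ring
      · funext z
        show (-(2 * g (x * (z * y)) + h (x * (z * y))) - x * -(2 * g (z * y) + h (z * y))
              - -(2 * g x + h x) * (z * y))
            - z * (-(2 * g (x * y) + h (x * y)) - x * -(2 * g y + h y)
              - -(2 * g x + h x) * y)
            - (-(2 * g (x * z) + h (x * z)) - x * -(2 * g z + h z)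
              - -(2 * g x + h x) * z) * y = 0
        rw [show x * (z * y) = x * z * y from (mul_assoc x z y).symm]
        linear_combination (-2 : R) * hTg x z y - hTh x z y
      · funext z
        show (-(2 * g (x * (y * z)) + h (x * (y * z))) - x * -(2 * g (y * z) + h (y * z))
              - -(2 * g x + h x) * (y * z))
            - y * (-(2 * g (x * z) + h (x * z)) - x * -(2 * g z + h z)
              - -(2 * g x + h x) * z)
            - (-(2 * g (x * y) + h (x * y)) - x * -(2 * g y + h y)
              - -(2 * g x + h x) * y) * z = 0
        rw [show x * (y * z) = x * y * z from (mul_assoc x y z).symm]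
        linear_combination (-2 : R) * hTg x y z - hTh x y z
  · intro x; linear_combination 3 * R4 x
  · intro x; ring
  · intro x; ring
end
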